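/- arXiv:2504.05529 — 3 statements merged into one kernel-verified Lean document; each statement's English description precedes it below -/
import Mathlib

section
/- Let R be a commutative ring, M an R-module with a finite free presentation, and φ: R → S a ring morphism. Then for every k ≥ 0, the kth Fitting ideal of S ⊗_R M over S equals the ideal of S generated by φ applied to the kth Fitting ideal of M over R. -/
/-- The `k`-th determinantal ideal of a matrix: the ideal generated by its `k × k`
minors (with the conventions `D_0 = R` and `D_k = 0` for `k > min(m,n)`). -/
def detIdeal {R : Type*} [CommRing R] {m n : ℕ} (k : ℕ) (A : Matrix (Fin m) (Fin n) R) :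
    Ideal R :=
  Ideal.span {d | ∃ (r : Fin k → Fin m) (c : Fin k → Fin n),
    Function.Injective r ∧ Function.Injective c ∧ d = (A.submatrix r c).det}

/-- `A` is a presentation matrix for the `R`-module `M`, i.e. there is an exact sequence
`R^n → R^m → M → 0` in which the first map is given by `A`. -/
def IsPresentation {R M : Type*} [CommRing R] [AddCommGroup M] [Module R M] {m n : ℕ}
    (A : Matrix (Fin m) (Fin n) R) : Prop :=
  ∃ π : (Fin m → R) →ₗ[R] M, Function.Surjective π ∧
    LinearMap.ker π = LinearMap.range A.mulVecLin

/-- The `k`-th Fitting ideal of a finitely presented module `M`, defined via the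
determinantal ideals `D_{m-k}` of presentation matrices (all presentations give the same
ideal, so the supremum below is this common value). -/
def fittingIdeal (R M : Type*) [CommRing R] [AddCommGroup M] [Module R M] (k : ℕ) :
    Ideal R :=
  sSup {I | ∃ (m n : ℕ) (A : Matrix (Fin m) (Fin n) R),
    IsPresentation (M := M) A ∧ I = detIdeal (m - k) A}

open TensorProduct

/-!
Minor ideals of a relation matrix depend only on its column span, since by multilinearity of the
determinant the minors of `A * U` lie in the ideal generated by the minors of `A` of the same size.
Given presentations `A` and `B` of `M` on `m` and `m'` generators, lifting the generators of the
second through the first presents `M` on all `m + m'` generators by `[[A, V], [0, -1]]`; its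
`(m + m' - k)`-minors generate the ideal of `(m - k)`-minors of `A` (Laplace expansion along the last
`m'` columns in one direction, block-triangular minors in the other). By symmetry this is also the
ideal of `(m' - k)`-minors of `B`, so the Fitting ideals are well defined. Since tensoring is right
exact, `S ⊗[R] M` is presented by the image of `A` in `S`, whose minors are the images of those of `A`.
-/

namespace Matrix

open Function

variable {R : Type*} [CommRing R] {ι κ : Type*}

def minorIdeal (k : ℕ) (A : Matrix ι κ R) : Ideal R :=
  Ideal.span {d | ∃ (r : Fin k → ι) (c : Fin k → κ), Injective r ∧ Injective c ∧
    d = (A.submatrix r c).det}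

theorem det_submatrix_mem_minorIdeal (A : Matrix ι κ R) {k : ℕ} {r : Fin k → ι}
    {c : Fin k → κ} (hr : Injective r) (hc : Injective c) :
    (A.submatrix r c).det ∈ A.minorIdeal k :=
  Ideal.subset_span ⟨r, c, hr, hc, rfl⟩

theorem det_submatrix_mem_minorIdeal_of_card_eq {τ : Type*} [Fintype τ] [DecidableEq τ]
    (A : Matrix ι κ R) {k : ℕ} (hk : Fintype.card τ = k) {r : τ → ι} {c : τ → κ}
    (hr : Injective r) (hc : Injective c) : (A.submatrix r c).det ∈ A.minorIdeal k := by
  let e := Fintype.equivFinOfCardEq hk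
  rw [← det_submatrix_equiv_self e.symm, submatrix_submatrix]
  exact A.det_submatrix_mem_minorIdeal (hr.comp e.symm.injective) (hc.comp e.symm.injective)

theorem minorIdeal_zero (A : Matrix ι κ R) : A.minorIdeal 0 = ⊤ :=
  Ideal.eq_top_of_isUnit_mem _
    (A.det_submatrix_mem_minorIdeal (r := finZeroElim) (c := finZeroElim)
      (fun x => x.elim0) (fun x => x.elim0))
    (by simp)

theorem minorIdeal_succ_le (A : Matrix ι κ R) (k : ℕ) :
    A.minorIdeal (k + 1) ≤ A.minorIdeal k := by
  refine Ideal.span_le.2 ?_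
  rintro _ ⟨r, c, hr, hc, rfl⟩
  rw [det_succ_row_zero]
  refine Ideal.sum_mem _ fun j _ => Ideal.mul_mem_left _ _ ?_
  rw [submatrix_submatrix]
  exact A.det_submatrix_mem_minorIdeal (hr.comp (Fin.succ_injective _))
    (hc.comp Fin.succAbove_right_injective)

theorem minorIdeal_antitone (A : Matrix ι κ R) : Antitone (A.minorIdeal ·) :=
  antitone_nat_of_succ_le A.minorIdeal_succ_le

theorem minorIdeal_transpose_le (A : Matrix ι κ R) (k : ℕ) :
    Aᵀ.minorIdeal k ≤ A.minorIdeal k := by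
  refine Ideal.span_le.2 ?_
  rintro _ ⟨r, c, hr, hc, rfl⟩
  rw [← transpose_submatrix, det_transpose]
  exact A.det_submatrix_mem_minorIdeal hc hr

@[simp]
theorem minorIdeal_transpose (A : Matrix ι κ R) (k : ℕ) : Aᵀ.minorIdeal k = A.minorIdeal k :=
  le_antisymm (A.minorIdeal_transpose_le k) (Aᵀ.minorIdeal_transpose_le k)

theorem minorIdeal_submatrix_le {ι' κ' : Type*} (A : Matrix ι κ R) {e : ι' → ι} {f : κ' → κ}
    (he : Injective e) (hf : Injective f) (k : ℕ) :
    (A.submatrix e f).minorIdeal k ≤ A.minorIdeal k := by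
  refine Ideal.span_le.2 ?_
  rintro _ ⟨r, c, hr, hc, rfl⟩
  rw [submatrix_submatrix]
  exact A.det_submatrix_mem_minorIdeal (he.comp hr) (hf.comp hc)

@[simp]
theorem minorIdeal_submatrix_equiv {ι' κ' : Type*} (A : Matrix ι κ R) (e : ι' ≃ ι)
    (f : κ' ≃ κ) (k : ℕ) : (A.submatrix e f).minorIdeal k = A.minorIdeal k := by
  refine le_antisymm (A.minorIdeal_submatrix_le e.injective f.injective k) ?_
  simpa using (A.submatrix e f).minorIdeal_submatrix_le e.symm.injective f.symm.injective k

theorem det_submatrix_mul_eq_sum [Fintype κ] {κ' : Type*} (A : Matrix ι κ R)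
    (U : Matrix κ κ' R) {k : ℕ} (r : Fin k → ι) (c : Fin k → κ') :
    ((A * U).submatrix r c).det =
      ∑ p : Fin k → κ, (∏ j, U (p j) (c j)) * (A.submatrix r p).det := by
  simp only [det_apply', submatrix_apply, mul_apply, Finset.prod_univ_sum,
    Finset.mul_sum, Fintype.piFinset_univ]
  rw [Finset.sum_comm]
  refine Finset.sum_congr rfl fun p _ => Finset.sum_congr rfl fun σ _ => ?_
  rw [Finset.prod_mul_distrib]
  ring

theorem minorIdeal_mul_le_left [Fintype κ] {κ' : Type*} (A : Matrix ι κ R)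
    (U : Matrix κ κ' R) (k : ℕ) : (A * U).minorIdeal k ≤ A.minorIdeal k := by
  refine Ideal.span_le.2 ?_
  rintro _ ⟨r, c, hr, hc, rfl⟩
  rw [det_submatrix_mul_eq_sum]
  refine Ideal.sum_mem _ fun p _ => Ideal.mul_mem_left _ _ ?_
  by_cases hp : Injective p
  · exact A.det_submatrix_mem_minorIdeal hr hp
  · obtain ⟨a, b, hab, hne⟩ := not_injective_iff.mp hp
    rw [det_zero_of_column_eq hne fun i => by simp [hab]]
    exact zero_mem _

theorem minorIdeal_mul_le_right [Fintype ι] {ι' : Type*} (E : Matrix ι' ι R)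
    (A : Matrix ι κ R) (k : ℕ) : (E * A).minorIdeal k ≤ A.minorIdeal k := by
  rw [← minorIdeal_transpose (E * A), ← minorIdeal_transpose A, transpose_mul]
  exact Aᵀ.minorIdeal_mul_le_left Eᵀ k

theorem exists_eq_mul_of_range_mulVecLin_le [Fintype κ] {κ' : Type*} [Fintype κ']
    {A : Matrix ι κ' R} {B : Matrix ι κ R}
    (h : LinearMap.range A.mulVecLin ≤ LinearMap.range B.mulVecLin) :
    ∃ U : Matrix κ κ' R, A = B * U := by
  classical
  choose w hw using fun j => h ⟨Pi.single j 1, rfl⟩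
  refine ⟨of fun b j => w j b, ext fun i j => ?_⟩
  have := congrFun (hw j) i
  simp only [mulVecLin_apply, mulVec_single_one] at this
  simpa [mul_apply, mulVec, dotProduct] using this.symm

theorem minorIdeal_le_of_range_mulVecLin_le [Fintype κ] {κ' : Type*} [Fintype κ']
    {A : Matrix ι κ' R} {B : Matrix ι κ R}
    (h : LinearMap.range A.mulVecLin ≤ LinearMap.range B.mulVecLin) (k : ℕ) :
    A.minorIdeal k ≤ B.minorIdeal k := by
  obtain ⟨U, rfl⟩ := exists_eq_mul_of_range_mulVecLin_le h
  exact B.minorIdeal_mul_le_left U k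

theorem minorIdeal_eq_of_range_mulVecLin_eq [Fintype κ] {κ' : Type*} [Fintype κ']
    {A : Matrix ι κ' R} {B : Matrix ι κ R}
    (h : LinearMap.range A.mulVecLin = LinearMap.range B.mulVecLin) (k : ℕ) :
    A.minorIdeal k = B.minorIdeal k :=
  le_antisymm (minorIdeal_le_of_range_mulVecLin_le h.le k)
    (minorIdeal_le_of_range_mulVecLin_le h.ge k)

theorem minorIdeal_map {S : Type*} [CommRing S] (f : R →+* S) (A : Matrix ι κ R) (k : ℕ) :
    (A.map f).minorIdeal k = Ideal.map f (A.minorIdeal k) := by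
  rw [minorIdeal, minorIdeal, Ideal.map_span]
  congr 1
  ext d
  simp only [Set.mem_ofPred_eq, Set.mem_image]
  constructor
  · rintro ⟨r, c, hr, hc, rfl⟩
    exact ⟨_, ⟨r, c, hr, hc, rfl⟩, by rw [RingHom.map_det, RingHom.mapMatrix_apply, submatrix_map]⟩
  · rintro ⟨_, ⟨r, c, hr, hc, rfl⟩, rfl⟩
    exact ⟨r, c, hr, hc, by rw [RingHom.map_det, RingHom.mapMatrix_apply, submatrix_map]⟩

theorem minorIdeal_succ_le_submatrix_of_forall_ne_mem_range {κ' : Type*} (A : Matrix ι κ R)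
    {f : κ' → κ} {j₀ : κ} (hj₀ : ∀ j, j ≠ j₀ → j ∈ Set.range f) (s : ℕ) :
    A.minorIdeal (s + 1) ≤ (A.submatrix id f).minorIdeal s := by
  have hminor : ∀ {t : ℕ} {r : Fin t → ι} {c : Fin t → κ}, Injective r → Injective c →
      (∀ j, c j ≠ j₀) → (A.submatrix r c).det ∈ (A.submatrix id f).minorIdeal t := by
    intro t r c hr hc hcj₀
    choose g hg using fun j => hj₀ (c j) (hcj₀ j)
    have hc' : c = f ∘ g := funext fun j => (hg j).symm
    subst hc'
    exact (A.submatrix id f).det_submatrix_mem_minorIdeal hr (Injective.of_comp hc)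
  refine Ideal.span_le.2 ?_
  rintro _ ⟨r, c, hr, hc, rfl⟩
  by_cases h : ∃ j₁, c j₁ = j₀
  · obtain ⟨j₁, hj₁⟩ := h
    rw [det_succ_column _ j₁]
    refine Ideal.sum_mem _ fun i _ => Ideal.mul_mem_left _ _ ?_
    rw [submatrix_submatrix]
    refine hminor (hr.comp Fin.succAbove_right_injective)
      (hc.comp Fin.succAbove_right_injective) fun j hj => ?_
    exact Fin.succAbove_ne j₁ j (hc (hj.trans hj₁.symm))
  · push Not at h
    exact (A.submatrix id f).minorIdeal_succ_le s (hminor hr hc h)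

theorem minorIdeal_fromCols_le {q : ℕ} (X : Matrix ι κ R) (Y : Matrix ι (Fin q) R) (t : ℕ) :
    (fromCols X Y).minorIdeal (t + q) ≤ X.minorIdeal t := by
  induction q with
  | zero =>
    have hY : fromCols X Y = X.submatrix (Equiv.refl ι) (Equiv.sumEmpty κ (Fin 0)) := by
      ext i (j | j)
      exacts [rfl, j.elim0]
    rw [hY, minorIdeal_submatrix_equiv, add_zero]
  | succ q ih =>
    have hdel := (fromCols X Y).minorIdeal_succ_le_submatrix_of_forall_ne_mem_range
      (f := Sum.map id Fin.castSucc) (j₀ := Sum.inr (Fin.last q)) ?_ (t + q)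
    · refine hdel.trans (le_of_eq_of_le ?_ (ih (Y.submatrix id Fin.castSucc)))
      congr 1
      ext i (j | j) <;> rfl
    · rintro (j | j) hj
      · exact ⟨Sum.inl j, rfl⟩
      · obtain ⟨j, rfl⟩ := Fin.exists_castSucc_eq.2 (fun h => hj (congrArg Sum.inr h))
        exact ⟨Sum.inr j, rfl⟩

theorem minorIdeal_le_minorIdeal_fromBlocks_zero₂₁ {τ : Type*} [Fintype τ] [DecidableEq τ]
    (A : Matrix ι κ R) (V : Matrix ι τ R) {U : Matrix τ τ R} (hU : IsUnit U.det) (t : ℕ) :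
    A.minorIdeal t ≤ (fromBlocks A V 0 U).minorIdeal (t + Fintype.card τ) := by
  refine Ideal.span_le.2 ?_
  rintro _ ⟨r, c, hr, hc, rfl⟩
  have hdet := (fromBlocks A V 0 U).det_submatrix_mem_minorIdeal_of_card_eq
    (k := t + Fintype.card τ) (by simp)
    (Sum.map_injective.2 ⟨hr, injective_id⟩) (Sum.map_injective.2 ⟨hc, injective_id⟩)
  have hsub : (fromBlocks A V 0 U).submatrix (Sum.map r id) (Sum.map c id) =
      fromBlocks (A.submatrix r c) (V.submatrix r id) 0 U := by
    ext (i | i) (j | j) <;> rfl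
  rwa [hsub, det_fromBlocks_zero₂₁, Ideal.mul_unit_mem_iff_mem _ hU] at hdet

theorem minorIdeal_fromBlocks_zero₂₁_le [Fintype ι] {q : ℕ} (A : Matrix ι κ R)
    (V : Matrix ι (Fin q) R) (U : Matrix (Fin q) (Fin q) R) (t : ℕ) :
    (fromBlocks A V 0 U).minorIdeal (t + q) ≤ A.minorIdeal t := by
  classical
  rw [← fromCols_fromRows_eq_fromBlocks]
  refine (minorIdeal_fromCols_le _ _ t).trans ?_
  simpa [fromRows_mul] using
    minorIdeal_mul_le_right (fromRows (1 : Matrix ι ι R) (0 : Matrix (Fin q) ι R)) A t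

theorem minorIdeal_fromBlocks_zero₂₁ [Fintype ι] {q : ℕ} (A : Matrix ι κ R)
    (V : Matrix ι (Fin q) R) {U : Matrix (Fin q) (Fin q) R} (hU : IsUnit U.det) (s : ℕ) :
    (fromBlocks A V 0 U).minorIdeal s = A.minorIdeal (s - q) := by
  have hle := A.minorIdeal_le_minorIdeal_fromBlocks_zero₂₁ V hU
  rw [Fintype.card_fin] at hle
  rcases le_or_gt q s with hs | hs
  · obtain ⟨t, rfl⟩ := Nat.exists_eq_add_of_le' hs
    rw [Nat.add_sub_cancel]
    exact le_antisymm (A.minorIdeal_fromBlocks_zero₂₁_le V U t) (hle t)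
  · rw [Nat.sub_eq_zero_of_le hs.le, minorIdeal_zero, eq_top_iff]
    simpa [minorIdeal_zero] using
      (hle 0).trans ((fromBlocks A V 0 U).minorIdeal_antitone (by omega : s ≤ 0 + q))

end Matrix

namespace LinearMap

variable {R M : Type*} [CommRing R] [AddCommGroup M] [Module R M]

def sumElim {ι τ : Type*} (f : (ι → R) →ₗ[R] M) (g : (τ → R) →ₗ[R] M) :
    (ι ⊕ τ → R) →ₗ[R] M :=
  f ∘ₗ funLeft R R Sum.inl + g ∘ₗ funLeft R R Sum.inr

@[simp]
theorem sumElim_apply {ι τ : Type*} (f : (ι → R) →ₗ[R] M) (g : (τ → R) →ₗ[R] M)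
    (x : ι ⊕ τ → R) : f.sumElim g x = f (x ∘ Sum.inl) + g (x ∘ Sum.inr) :=
  rfl

theorem exists_comp_mulVecLin_eq {ι τ : Type*} [Fintype τ] [DecidableEq τ]
    {π : (ι → R) →ₗ[R] M} (hπ : Function.Surjective π) (g : (τ → R) →ₗ[R] M) :
    ∃ V : Matrix ι τ R, π ∘ₗ V.mulVecLin = g := by
  obtain ⟨h, rfl⟩ := Module.projective_lifting_property π g hπ
  exact ⟨toMatrix' h, by rw [← Matrix.toLin'_apply', Matrix.toLin'_toMatrix']⟩

open Matrix

theorem ker_sumElim_eq_range_fromBlocks {ι κ : Type*} [Fintype κ] {q : ℕ}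
    {π : (ι → R) →ₗ[R] M} {A : Matrix ι κ R} (hA : ker π = range A.mulVecLin)
    (V : Matrix ι (Fin q) R) :
    ker (π.sumElim (π ∘ₗ V.mulVecLin)) = range (fromBlocks A V 0 (-1)).mulVecLin := by
  ext x
  have hπ : ∀ y, π y = 0 ↔ ∃ u, A *ᵥ u = y := fun y => SetLike.ext_iff.1 hA y
  simp only [mem_ker, mem_range, sumElim_apply, comp_apply, mulVecLin_apply, ← map_add, hπ]
  constructor
  · rintro ⟨u, hu⟩
    refine ⟨Sum.elim u (-(x ∘ Sum.inr)), ?_⟩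
    ext (i | i) <;> simp [fromBlocks_mulVec, hu, mulVec_neg, neg_mulVec]
  · rintro ⟨v, rfl⟩
    exact ⟨v ∘ Sum.inl, by ext i; simp [fromBlocks_mulVec, neg_mulVec, mulVec_neg]⟩

theorem ker_sumElim_swap {ι τ κ : Type*} [Fintype κ] {f : (ι → R) →ₗ[R] M}
    {g : (τ → R) →ₗ[R] M} {C : Matrix (ι ⊕ τ) κ R}
    (hC : ker (f.sumElim g) = range C.mulVecLin) :
    ker (g.sumElim f) = range (C.submatrix (Equiv.sumComm τ ι) (Equiv.refl κ)).mulVecLin := by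
  ext x
  have hswap : g.sumElim f x = f.sumElim g (x ∘ Sum.swap) := add_comm _ _
  rw [mem_ker, hswap, ← mem_ker, hC]
  have hmul : ∀ u, C.submatrix (Equiv.sumComm τ ι) (Equiv.refl κ) *ᵥ u = (C *ᵥ u) ∘ Sum.swap :=
    fun u => rfl
  simp only [mem_range, mulVecLin_apply, hmul]
  exact exists_congr fun u =>
    ⟨fun h => by rw [h]; ext; simp, fun h => by rw [← h]; ext; simp⟩

end LinearMap

section Fitting

open Function LinearMap Matrix TensorProduct

variable {R M : Type*} [CommRing R] [AddCommGroup M] [Module R M]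

theorem minorIdeal_eq_of_ker_sumElim {m q : ℕ} {κ κ' : Type*} [Fintype κ] [Fintype κ']
    {π : (Fin m → R) →ₗ[R] M} (hπ : Surjective π) {A : Matrix (Fin m) κ R}
    (hA : ker π = range A.mulVecLin) (g : (Fin q → R) →ₗ[R] M)
    {C : Matrix (Fin m ⊕ Fin q) κ' R} (hC : ker (π.sumElim g) = range C.mulVecLin) (k : ℕ) :
    C.minorIdeal (m + q - k) = A.minorIdeal (m - k) := by
  obtain ⟨V, rfl⟩ := exists_comp_mulVecLin_eq hπ g
  rw [minorIdeal_eq_of_range_mulVecLin_eq (hC.symm.trans (ker_sumElim_eq_range_fromBlocks hA V)),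
    minorIdeal_fromBlocks_zero₂₁ A V (by simp [det_neg, IsUnit.pow])]
  congr 1
  omega

theorem IsPresentation.detIdeal_eq {m n m' n' : ℕ} {A : Matrix (Fin m) (Fin n) R}
    {B : Matrix (Fin m') (Fin n') R} (hA : IsPresentation (M := M) A)
    (hB : IsPresentation (M := M) B) (k : ℕ) : detIdeal (m - k) A = detIdeal (m' - k) B := by
  obtain ⟨π, hπ, hπA⟩ := hA
  obtain ⟨π', hπ', hπ'B⟩ := hB
  obtain ⟨V, hV⟩ := exists_comp_mulVecLin_eq hπ π'
  have hC := ker_sumElim_eq_range_fromBlocks hπA V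
  rw [hV] at hC
  calc detIdeal (m - k) A = (fromBlocks A V 0 (-1)).minorIdeal (m + m' - k) :=
        (minorIdeal_eq_of_ker_sumElim hπ hπA π' hC k).symm
    _ = ((fromBlocks A V 0 (-1)).submatrix (Equiv.sumComm _ _) (Equiv.refl _)).minorIdeal
          (m' + m - k) := by rw [minorIdeal_submatrix_equiv, Nat.add_comm]
    _ = detIdeal (m' - k) B := minorIdeal_eq_of_ker_sumElim hπ' hπ'B π (ker_sumElim_swap hC) k

theorem fittingIdeal_eq_detIdeal {m n : ℕ} {A : Matrix (Fin m) (Fin n) R}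
    (hA : IsPresentation (M := M) A) (k : ℕ) : fittingIdeal R M k = detIdeal (m - k) A := by
  refine le_antisymm (sSup_le ?_) (le_sSup ⟨m, n, A, hA, rfl⟩)
  rintro _ ⟨m', n', B, hB, rfl⟩
  exact (hB.detIdeal_eq hA k).le

theorem Matrix.piScalarRight_comp_baseChange_mulVecLin (S : Type*) [CommRing S] [Algebra R S]
    {ι κ : Type*} [Fintype ι] [Fintype κ] [DecidableEq ι] [DecidableEq κ] (A : Matrix ι κ R) :
    (piScalarRight R S S ι).toLinearMap ∘ₗ A.mulVecLin.baseChange S =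
      (A.map (algebraMap R S)).mulVecLin ∘ₗ (piScalarRight R S S κ).toLinearMap := by
  refine TensorProduct.AlgebraTensorModule.ext fun a v => ?_
  ext i
  simp [mulVec, dotProduct, Finset.sum_mul, Algebra.smul_def, mul_assoc]

theorem IsPresentation.baseChange (S : Type*) [CommRing S] [Algebra R S] {m n : ℕ}
    {A : Matrix (Fin m) (Fin n) R} (hA : IsPresentation (M := M) A) :
    IsPresentation (M := S ⊗[R] M) (A.map (algebraMap R S)) := by
  obtain ⟨π, hπ, hker⟩ := hA
  set e := piScalarRight R S S (Fin m)
  refine ⟨π.baseChange S ∘ₗ e.symm.toLinearMap,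
    (π.baseChange_surjective S hπ).comp e.symm.surjective, ?_⟩
  have hexact : Exact (A.mulVecLin.baseChange S) (π.baseChange S) := by
    simpa only [baseChange_eq_ltensor] using lTensor_exact S (exact_iff.2 hker) hπ
  rw [ker_comp, exact_iff.1 hexact, Submodule.comap_equiv_eq_map_symm, LinearEquiv.symm_symm,
    ← range_comp, piScalarRight_comp_baseChange_mulVecLin, range_comp_of_range_eq_top]
  exact range_eq_top.2 (piScalarRight R S S (Fin n)).surjective

end Fitting

/-- base change of Fitting ideals.  Let `R` be a commutative ring, `M` an
`R`-module with a finite free presentation, and `φ : R → S` a ring morphism (encoded as the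
structure morphism `algebraMap R S` of an `R`-algebra).  Then for every `k ≥ 0`, the `k`-th
Fitting ideal of `S ⊗_R M` over `S` is the ideal of `S` generated by the image under `φ` of
the `k`-th Fitting ideal of `M` over `R`. -/
theorem statement11 {R S M : Type} [CommRing R] [CommRing S] [Algebra R S]
    [AddCommGroup M] [Module R M]
    (hM : ∃ (m n : ℕ) (A : Matrix (Fin m) (Fin n) R), IsPresentation (M := M) A)
    (k : ℕ) :
    fittingIdeal S (S ⊗[R] M) k = Ideal.map (algebraMap R S) (fittingIdeal R M k) := by
  obtain ⟨m, n, A, hA⟩ := hM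
  rw [fittingIdeal_eq_detIdeal (hA.baseChange S) k, fittingIdeal_eq_detIdeal hA k]
  exact Matrix.minorIdeal_map (algebraMap R S) A (m - k)
end

section
/- Let Y/X be an abelian cover of finite graphs with Galois group G, and let η_{Y/X}(u) = det_{Z[G]}(I − 𝒜u + (𝒟 − I)u²) ∈ Z[G][u], where 𝒜 and 𝒟 are the adjacency and degree operators on the free Z[G]-module Div(Y). Then ι(η_{Y/X}(u)) = η_{Y/X}(u), where ι is the involution of Z[G][u] induced by σ ↦ σ⁻¹ on G. Consequently, for any commutative ring R and any R-valued character ψ of G, one has h_{Y/X}(u,ψ) = h_{Y/X}(u,ψ*), where h_{Y/X}(u,ψ) = ψ(η_{Y/X}(u)) and ψ*(σ) = ψ(σ⁻¹). -/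
open Polynomial Matrix

/-! The `(i, j)` entry of `𝒜` counts, for each `σ`, the edges from `σ • w j` to `w i`.
Reversing an edge and translating it by `σ` matches these with the edges from `σ⁻¹ • w i`
to `w j`, so the involution `ι` carries `𝒜` to its transpose while fixing `𝒟`. Hence `ι` maps
the matrix `I − 𝒜u + (𝒟 − I)u²` to its transpose and fixes its determinant. The ring map
induced by `ψ*` is the one induced by `ψ` composed with `ι`, which gives the second claim. -/

/-- The polynomial `η_{Y/X}(u) = det_{ℤ[G]}(I − 𝒜u + (𝒟 − I)u²) ∈ ℤ[G][u]` of an abelian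
cover, computed with respect to the `ℤ[G]`-basis `(w 1, …, w g)` of `Div(Y)` given by
chosen lifts of the vertices of `X`. -/
noncomputable def etaPoly {G V E : Type} [CommGroup G] [Fintype G] [Fintype E]
    [MulAction G V] (o t : E → V) (g : ℕ) (w : Fin g → V) :
    Polynomial (MonoidAlgebra ℤ G) :=
  Matrix.det (Matrix.of fun i j : Fin g =>
    (if i = j then (1 : Polynomial (MonoidAlgebra ℤ G)) else 0)
    - Polynomial.C (∑ σ : G, MonoidAlgebra.single σ⁻¹
        ((Nat.card {ε : E // o ε = σ • w j ∧ t ε = w i} : ℤ))) * Polynomial.X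
    + (if i = j then
        Polynomial.C ((Nat.card {ε : E // o ε = w i} : MonoidAlgebra ℤ G) - 1)
          * Polynomial.X ^ 2
       else 0))

/-- The ring morphism `ℤ[G][u] → R[u]` induced coefficientwise by an `R`-valued character
`ψ` of `G`; `h_{Y/X}(u, ψ)` is its value on `η_{Y/X}(u)`. -/
noncomputable def charPolyMap {G : Type} [CommGroup G] {R : Type} [CommRing R]
    (ψ : G →* Rˣ) (q : Polynomial (MonoidAlgebra ℤ G)) : Polynomial R :=
  Polynomial.map (MonoidAlgebra.lift ℤ R G ((Units.coeHom R).comp ψ)).toRingHom q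

section EdgeReversal

variable {G V E : Type} [Group G] [MulAction G V] [MulAction G E]
  {o t : E → V} {bar : E → E}

theorem card_edges_inv_smul_eq_card_edges_smul (hbar : ∀ ε, bar (bar ε) = ε)
    (hob : ∀ ε, o (bar ε) = t ε) (htb : ∀ ε, t (bar ε) = o ε)
    (ho : ∀ (σ : G) (ε : E), o (σ • ε) = σ • o ε)
    (ht : ∀ (σ : G) (ε : E), t (σ • ε) = σ • t ε) (σ : G) (a b : V) :
    Nat.card {ε : E // o ε = σ⁻¹ • a ∧ t ε = b} =
      Nat.card {ε : E // o ε = σ • b ∧ t ε = a} :=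
  Nat.card_congr
    { toFun := fun ε => ⟨σ • bar ε.1, by rw [ho, hob, ε.2.2],
        by rw [ht, htb, ε.2.1, smul_inv_smul]⟩
      invFun := fun ε => ⟨bar (σ⁻¹ • ε.1), by rw [hob, ht, ε.2.2],
        by rw [htb, ho, ε.2.1, inv_smul_smul]⟩
      left_inv := fun ε => by ext; simp [hbar]
      right_inv := fun ε => by ext; simp [hbar] }

end EdgeReversal

section GroupRingInvolution

noncomputable abbrev invInvolution (G : Type) [CommGroup G] :
    MonoidAlgebra ℤ G →+* MonoidAlgebra ℤ G :=
  MonoidAlgebra.mapDomainRingHom ℤ (invMonoidHom (α := G))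

variable {G : Type} [CommGroup G]

theorem lift_comp_inv_eq_comp_invInvolution {R : Type} [CommRing R] (χ : G →* R) :
    (MonoidAlgebra.lift ℤ R G (χ.comp invMonoidHom)).toRingHom =
      (MonoidAlgebra.lift ℤ R G χ).toRingHom.comp (invInvolution G) :=
  MonoidAlgebra.ringHom_ext (fun n => by simp) (fun σ => by simp)

noncomputable def groupRingSum [Fintype G] (c : G → ℤ) : MonoidAlgebra ℤ G :=
  ∑ σ : G, MonoidAlgebra.single σ⁻¹ (c σ)

theorem invInvolution_groupRingSum [Fintype G] (c : G → ℤ) :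
    invInvolution G (groupRingSum c) = groupRingSum (fun σ => c σ⁻¹) := by
  rw [groupRingSum, groupRingSum, map_sum,
    ← Equiv.sum_comp (Equiv.inv G) (fun σ => MonoidAlgebra.single σ⁻¹ (c σ⁻¹))]
  simp

end GroupRingInvolution

theorem RingHom.map_det_eq_of_mapMatrix_eq_transpose {n R : Type} [Fintype n] [DecidableEq n]
    [CommRing R] (f : R →+* R) (M : Matrix n n R) (hM : f.mapMatrix M = Mᵀ) :
    f M.det = M.det := by
  rw [RingHom.map_det, hM, Matrix.det_transpose]

section Eta

variable {G V E : Type} [CommGroup G] [Fintype G] [MulAction G V]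

noncomputable def etaMatrix (o t : E → V) (g : ℕ) (w : Fin g → V) :
    Matrix (Fin g) (Fin g) (Polynomial (MonoidAlgebra ℤ G)) :=
  Matrix.of fun i j =>
    (if i = j then 1 else 0)
    - C (groupRingSum fun σ : G => (Nat.card {ε : E // o ε = σ • w j ∧ t ε = w i} : ℤ)) * X
    + (if i = j then C ((Nat.card {ε : E // o ε = w i} : MonoidAlgebra ℤ G) - 1) * X ^ 2
       else 0)

theorem etaPoly_eq_det_etaMatrix [Fintype E] (o t : E → V) (g : ℕ) (w : Fin g → V) :
    etaPoly o t g w = (etaMatrix (G := G) o t g w).det :=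
  rfl

theorem mapMatrix_invInvolution_etaMatrix [MulAction G E] {o t : E → V} {bar : E → E}
    (hbar : ∀ ε, bar (bar ε) = ε)
    (hob : ∀ ε, o (bar ε) = t ε) (htb : ∀ ε, t (bar ε) = o ε)
    (ho : ∀ (σ : G) (ε : E), o (σ • ε) = σ • o ε)
    (ht : ∀ (σ : G) (ε : E), t (σ • ε) = σ • t ε) (g : ℕ) (w : Fin g → V) :
    (mapRingHom (invInvolution G)).mapMatrix (etaMatrix o t g w) =
      (etaMatrix o t g w)ᵀ := by
  ext1 i j
  have hA : invInvolution G
      (groupRingSum fun σ : G => (Nat.card {ε : E // o ε = σ • w j ∧ t ε = w i} : ℤ)) =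
        groupRingSum fun σ : G => (Nat.card {ε : E // o ε = σ • w i ∧ t ε = w j} : ℤ) := by
    rw [invInvolution_groupRingSum]
    simp_rw [card_edges_inv_smul_eq_card_edges_smul hbar hob htb ho ht]
  by_cases hij : i = j
  · subst hij
    simp [etaMatrix, hA]
  · simp [etaMatrix, hA, hij, Ne.symm hij]

end Eta

theorem statement16_general {G V E : Type} [CommGroup G] [Fintype G] [Fintype E]
    [MulAction G V] [MulAction G E]
    (o t : E → V) (bar : E → E)
    (hbar : ∀ ε, bar (bar ε) = ε)
    (hob : ∀ ε, o (bar ε) = t ε) (htb : ∀ ε, t (bar ε) = o ε)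
    (ho : ∀ (σ : G) (ε : E), o (σ • ε) = σ • o ε)
    (ht : ∀ (σ : G) (ε : E), t (σ • ε) = σ • t ε)
    (g : ℕ) (w : Fin g → V) :
    Polynomial.map (MonoidAlgebra.mapDomainRingHom ℤ (invMonoidHom (α := G)))
        (etaPoly o t g w) = etaPoly o t g w ∧
    ∀ (R : Type) [CommRing R] (ψ : G →* Rˣ),
      charPolyMap ψ (etaPoly o t g w)
        = charPolyMap (ψ.comp (invMonoidHom (α := G))) (etaPoly o t g w) := by
  have hfixed : map (invInvolution G) (etaPoly o t g w) = etaPoly o t g w := by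
    rw [etaPoly_eq_det_etaMatrix, ← coe_mapRingHom]
    exact RingHom.map_det_eq_of_mapMatrix_eq_transpose _ _
      (mapMatrix_invInvolution_etaMatrix hbar hob htb ho ht g w)
  refine ⟨hfixed, fun R _ ψ => ?_⟩
  rw [charPolyMap, charPolyMap, ← MonoidHom.comp_assoc, lift_comp_inv_eq_comp_invInvolution,
    ← Polynomial.map_map, hfixed]

/-- For an abelian cover `Y/X` of finite graphs with Galois group `G`,
the polynomial `η_{Y/X}(u)` is fixed by the involution `ι` of `ℤ[G][u]` induced by
`σ ↦ σ⁻¹`; consequently, for any commutative ring `R` and `R`-valued character `ψ` of `G`,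
`h_{Y/X}(u,ψ) = h_{Y/X}(u,ψ*)`, where `ψ*(σ) = ψ(σ⁻¹)`. -/
theorem statement16 {G V E : Type} [CommGroup G] [Fintype G] [Fintype V] [Fintype E]
    [MulAction G V] [MulAction G E]
    (o t : E → V) (bar : E → E)
    (hbar : ∀ ε, bar (bar ε) = ε)
    (hob : ∀ ε, o (bar ε) = t ε) (htb : ∀ ε, t (bar ε) = o ε)
    (ho : ∀ (σ : G) (ε : E), o (σ • ε) = σ • o ε)
    (ht : ∀ (σ : G) (ε : E), t (σ • ε) = σ • t ε)
    (g : ℕ) (w : Fin g → V)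
    (hbasis : ∀ v : V, ∃! q : Fin g × G, q.2 • w q.1 = v) :
    Polynomial.map (MonoidAlgebra.mapDomainRingHom ℤ (invMonoidHom (α := G)))
        (etaPoly o t g w) = etaPoly o t g w ∧
    ∀ (R : Type) [CommRing R] (ψ : G →* Rˣ),
      charPolyMap ψ (etaPoly o t g w)
        = charPolyMap (ψ.comp (invMonoidHom (α := G))) (etaPoly o t g w) :=
  statement16_general o t bar hbar hob htb ho ht g w
end

section
/- Let p be an odd prime and Y/X a Galois cover of finite connected graphs with Galois group Δ ≅ F_p^×, with A the p-primary subgroup of Pic⁰(Y). For the trivial character ψ₀, the component e_{ψ₀}A is isomorphic as a Z_p-module to the p-primary subgroup of Pic⁰(X); in particular #e_{ψ₀}A equals the p-part of the number of spanning trees of X. -/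
section GraphScaffold

variable {Δ V E : Type}

/-- `a_u(v)`: the number of directed edges from `v` to `u`, as an integer. -/
noncomputable def edgeCnt [Fintype E] (o t : E → V) (u v : V) : ℤ :=
  Nat.card {ε : E // o ε = v ∧ t ε = u}

/-- The valence of the vertex `u`. -/
noncomputable def valCnt [Fintype E] (o : E → V) (u : V) : ℤ :=
  Nat.card {ε : E // o ε = u}

/-- The Laplacian operator `ℒ = 𝒟 − 𝒜` on `Div(Y) = (V → ℤ)`. -/
noncomputable def lapHom [Fintype V] [Fintype E] (o t : E → V) : (V → ℤ) →+ (V → ℤ) :=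
  AddMonoidHom.mk' (fun D u => valCnt o u * D u - ∑ v : V, edgeCnt o t u v * D v)
    (by
      intro D₁ D₂
      funext u
      simp only [Pi.add_apply, mul_add, Finset.sum_add_distrib]
      ring)

/-- The degree map `Div(Y) → ℤ`. -/
def degHom [Fintype V] : (V → ℤ) →+ ℤ :=
  AddMonoidHom.mk' (fun D => ∑ v : V, D v)
    (by intro a b; simp [Finset.sum_add_distrib])

/-- `Div⁰(Y)`, the divisors of degree zero. -/
def div0 (V : Type) [Fintype V] : AddSubgroup (V → ℤ) := (degHom (V := V)).ker

/-- The principal divisors `ℒ(Div(Y))`, viewed inside `Div⁰(Y)`. -/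
noncomputable def prSub [Fintype V] [Fintype E] (o t : E → V) : AddSubgroup (div0 V) :=
  ((lapHom o t).range.comap (div0 V).subtype)

/-- The degree zero Picard group `Pic⁰(Y) = Div⁰(Y)/ℒ(Div(Y))`. -/
noncomputable abbrev pic0 [Fintype V] [Fintype E] (o t : E → V) : Type :=
  div0 V ⧸ prSub o t

/-- The action of `σ ∈ Δ` on divisors. -/
def shiftHom [Group Δ] [MulAction Δ V] (σ : Δ) : (V → ℤ) →+ (V → ℤ) :=
  AddMonoidHom.mk' (fun D v => D (σ⁻¹ • v)) (by intro a b; rfl)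

/-- The action of `σ ∈ Δ` on degree zero divisors. -/
def shiftDiv0 [Fintype V] [Group Δ] [MulAction Δ V] (σ : Δ) : div0 V →+ div0 V :=
  AddMonoidHom.mk'
    (fun D => ⟨shiftHom σ D.1, by
      have h2 : ∑ v : V, (D : V → ℤ) v = 0 := D.2
      show degHom _ = 0
      exact (Fintype.sum_equiv (MulAction.toPerm σ⁻¹)
        (fun v => (D : V → ℤ) (σ⁻¹ • v)) (fun v => (D : V → ℤ) v)
        (fun v => rfl)).trans h2⟩)
    (by intro a b; exact Subtype.ext (map_add (shiftHom σ) _ _))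


/-- Equivariance of the edge count under the Galois action. -/
theorem edgeCnt_smul [Fintype E] [Group Δ] [MulAction Δ V] [MulAction Δ E]
    (o t : E → V)
    (ho : ∀ (σ : Δ) (ε : E), o (σ • ε) = σ • o ε)
    (ht : ∀ (σ : Δ) (ε : E), t (σ • ε) = σ • t ε)
    (σ : Δ) (u v : V) :
    edgeCnt o t (σ • u) (σ • v) = edgeCnt o t u v := by
  unfold edgeCnt
  congr 1
  refine Nat.card_congr (Equiv.symm ?_)
  refine ⟨fun x => ⟨σ • x.1, ?_, ?_⟩, fun x => ⟨σ⁻¹ • x.1, ?_, ?_⟩, ?_, ?_⟩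
  · rw [ho, x.2.1]
  · rw [ht, x.2.2]
  · rw [ho, x.2.1, inv_smul_smul]
  · rw [ht, x.2.2, inv_smul_smul]
  · intro x; exact Subtype.ext (inv_smul_smul σ x.1)
  · intro x; exact Subtype.ext (smul_inv_smul σ x.1)

/-- Equivariance of the valence under the Galois action. -/
theorem valCnt_smul [Fintype E] [Group Δ] [MulAction Δ V] [MulAction Δ E]
    (o : E → V)
    (ho : ∀ (σ : Δ) (ε : E), o (σ • ε) = σ • o ε)
    (σ : Δ) (u : V) :
    valCnt o (σ • u) = valCnt o u := by
  unfold valCnt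
  congr 1
  refine Nat.card_congr (Equiv.symm ?_)
  refine ⟨fun x => ⟨σ • x.1, ?_⟩, fun x => ⟨σ⁻¹ • x.1, ?_⟩, ?_, ?_⟩
  · rw [ho, x.2]
  · rw [ho, x.2, inv_smul_smul]
  · intro x; exact Subtype.ext (inv_smul_smul σ x.1)
  · intro x; exact Subtype.ext (smul_inv_smul σ x.1)

/-- The Laplacian commutes with the Galois action. -/
theorem lap_shift [Fintype V] [Fintype E] [Group Δ] [MulAction Δ V] [MulAction Δ E]
    (o t : E → V)
    (ho : ∀ (σ : Δ) (ε : E), o (σ • ε) = σ • o ε)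
    (ht : ∀ (σ : Δ) (ε : E), t (σ • ε) = σ • t ε)
    (σ : Δ) (D : V → ℤ) :
    lapHom o t (shiftHom σ D) = shiftHom σ (lapHom o t D) := by
  funext u
  show valCnt o u * D (σ⁻¹ • u) - ∑ v : V, edgeCnt o t u v * D (σ⁻¹ • v)
      = valCnt o (σ⁻¹ • u) * D (σ⁻¹ • u) - ∑ v : V, edgeCnt o t (σ⁻¹ • u) v * D v
  rw [valCnt_smul o ho σ⁻¹ u]
  congr 1
  refine Fintype.sum_equiv (MulAction.toPerm σ⁻¹) _ _ (fun v => ?_)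
  show edgeCnt o t u v * D (σ⁻¹ • v) = edgeCnt o t (σ⁻¹ • u) (σ⁻¹ • v) * D (σ⁻¹ • v)
  rw [edgeCnt_smul o t ho ht σ⁻¹ u v]

/-- The induced action of `σ ∈ Δ` on `Pic⁰(Y)`; this is well defined because the action of
the Galois group commutes with the Laplacian. -/
noncomputable def picAct [Fintype V] [Fintype E] [Group Δ] [MulAction Δ V] [MulAction Δ E]
    (o t : E → V)
    (ho : ∀ (σ : Δ) (ε : E), o (σ • ε) = σ • o ε)
    (ht : ∀ (σ : Δ) (ε : E), t (σ • ε) = σ • t ε)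
    (σ : Δ) : pic0 o t →+ pic0 o t :=
  QuotientAddGroup.lift (prSub o t)
    ((QuotientAddGroup.mk' (prSub o t)).comp (shiftDiv0 σ))
    (by
      rintro x ⟨D, hD⟩
      rw [AddMonoidHom.mem_ker, AddMonoidHom.comp_apply, QuotientAddGroup.mk'_apply,
        QuotientAddGroup.eq_zero_iff]
      refine ⟨shiftHom σ D, ?_⟩
      show lapHom o t (shiftHom σ D) = (shiftDiv0 σ x : V → ℤ)
      rw [lap_shift o t ho ht σ D, hD]
      rfl)

/-- The `p`-primary subgroup of an additive commutative group. -/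
def primarySub (p : ℕ) (M : Type*) [AddCommGroup M] : AddSubgroup M where
  carrier := {g | ∃ n : ℕ, p ^ n • g = 0}
  zero_mem' := ⟨0, smul_zero _⟩
  add_mem' := by
    rintro a b ⟨m, hm⟩ ⟨n, hn⟩
    refine ⟨m + n, ?_⟩
    have ha : p ^ (m + n) • a = 0 := by
      rw [pow_add, mul_comm, mul_smul, hm, smul_zero]
    have hb : p ^ (m + n) • b = 0 := by
      rw [pow_add, mul_smul, hn, smul_zero]
    rw [smul_add, ha, hb, add_zero]
  neg_mem' := by
    rintro a ⟨n, hn⟩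
    exact ⟨n, by rw [smul_neg, hn, neg_zero]⟩

/-- The action of `σ ∈ Δ` on `A`, the `p`-primary subgroup of `Pic⁰(Y)`. -/
noncomputable def actA (p : ℕ) [Fintype V] [Fintype E] [Group Δ] [MulAction Δ V] [MulAction Δ E]
    (o t : E → V)
    (ho : ∀ (σ : Δ) (ε : E), o (σ • ε) = σ • o ε)
    (ht : ∀ (σ : Δ) (ε : E), t (σ • ε) = σ • t ε)
    (σ : Δ) : primarySub p (pic0 o t) →+ primarySub p (pic0 o t) :=
  AddMonoidHom.mk'
    (fun x => ⟨picAct o t ho ht σ x.1, by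
      obtain ⟨n, hn⟩ := x.2
      exact ⟨n, by rw [← map_nsmul, hn, map_zero]⟩⟩)
    (by intro a b; exact Subtype.ext (map_add (picAct o t ho ht σ) _ _))

/-- The endomorphism of `A` given by the idempotent
`e_ψ = (1/(p−1)) ∑_{σ∈Δ} ψ(σ)σ⁻¹ ∈ ℤ_p[Δ]`.  The `ℤ_p`-scalars act on the finite abelian
`p`-group `A` through their approximations modulo a sufficiently large power of `p`. -/
noncomputable def ePsiHom (p : ℕ) [Fact p.Prime] [Fintype V] [Fintype E] [CommGroup Δ]
    [Fintype Δ] [MulAction Δ V] [MulAction Δ E]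
    (o t : E → V)
    (ho : ∀ (σ : Δ) (ε : E), o (σ • ε) = σ • o ε)
    (ht : ∀ (σ : Δ) (ε : E), t (σ • ε) = σ • t ε)
    (ψ : Δ →* ℤ_[p]ˣ) : primarySub p (pic0 o t) →+ primarySub p (pic0 o t) :=
  ∑ σ : Δ,
    ((Ring.inverse ((p : ℤ_[p]) - 1) * (ψ σ : ℤ_[p])).appr
        (Nat.card (primarySub p (pic0 o t)))) • actA p o t ho ht σ⁻¹

/-- The matrix of the Laplacian operator with respect to the `ℤ[Δ]`-basis `(w 1, …, w g)`
of `Div(Y)`. -/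
noncomputable def lapMat [Fintype E] [CommGroup Δ] [Fintype Δ] [MulAction Δ V]
    (o t : E → V) (g : ℕ) (w : Fin g → V) :
    Matrix (Fin g) (Fin g) (MonoidAlgebra ℤ Δ) :=
  Matrix.of fun i j =>
    (if i = j then (valCnt o (w i) : MonoidAlgebra ℤ Δ) else 0)
    - ∑ σ : Δ, MonoidAlgebra.single σ⁻¹ ((edgeCnt o t (w i) (σ • w j) : ℤ))

/-- The ring morphism `ℤ[Δ] → ℤ_p` induced by a `ℤ_p`-valued character `ψ` of `Δ`. -/
noncomputable def psiRingHom (p : ℕ) [Fact p.Prime] [CommGroup Δ] (ψ : Δ →* ℤ_[p]ˣ) :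
    MonoidAlgebra ℤ Δ →+* ℤ_[p] :=
  (MonoidAlgebra.lift ℤ ℤ_[p] Δ ((Units.coeHom ℤ_[p]).comp ψ)).toRingHom

end GraphScaffold

section QuotientGraph

variable {Δ V E : Type} [Group Δ] [MulAction Δ V] [MulAction Δ E]

/-- The map on orbit spaces induced by an equivariant map, e.g. the origin/terminus maps
of the quotient graph `X = Y/Δ`. -/
def quotMap (o : E → V) (ho : ∀ (σ : Δ) (ε : E), o (σ • ε) = σ • o ε) :
    Quotient (MulAction.orbitRel Δ E) → Quotient (MulAction.orbitRel Δ V) :=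
  Quotient.map o (by
    rintro a b h
    obtain ⟨σ, hσ⟩ := h
    exact MulAction.mem_orbit_iff.mpr ⟨σ, by rw [← hσ, ho]⟩)


open MulAction Function

/-! Pulling divisors back along the quotient map `Y → X = Y/Δ` and pushing them forward both
commute with the Laplacians, because `Δ` acts freely on the vertices. They induce
`π^* : Pic⁰(X) → Pic⁰(Y)` and `π_* : Pic⁰(Y) → Pic⁰(X)` with `π^* π_* = N_Δ` and
`π_* π^* = #Δ = p - 1`. As `p - 1` is prime to `p`, on `p`-primary parts `π^*` is injective with
the same image as `N_Δ`, and `e_{ψ₀}` is `N_Δ` times a `p`-adic unit, so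
`e_{ψ₀}A = N_Δ A ≅ Pic⁰(X)[p^∞]`. -/

section PrimaryComponent

variable {p : ℕ} {M N : Type*} [AddCommGroup M] [AddCommGroup N]

theorem map_mem_primarySub (φ : M →+ N) {x : M} (hx : x ∈ primarySub p M) :
    φ x ∈ primarySub p N := by
  obtain ⟨n, hn⟩ := hx
  exact ⟨n, by rw [← map_nsmul, hn, map_zero]⟩

variable (p) in
def primarySubMap (φ : M →+ N) : primarySub p M →+ primarySub p N :=
  (φ.comp (primarySub p M).subtype).codRestrict _ fun x => map_mem_primarySub φ x.2

theorem bijective_nsmul_primarySub [Fact p.Prime] {n : ℕ} (hn : ¬ p ∣ n) :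
    Bijective fun x : primarySub p M => n • x := by
  have hinv : ∀ x : primarySub p M, ∃ m : ℕ, m • n • x = x := fun x => by
    obtain ⟨k, hk⟩ := x.2
    have hord : addOrderOf x ∣ p ^ k := addOrderOf_dvd_of_nsmul_eq_zero (Subtype.ext hk)
    exact exists_nsmul_eq_self_of_coprime <|
      ((Nat.Prime.coprime_iff_not_dvd Fact.out).mpr hn).symm.pow_right k |>.coprime_dvd_right hord
  refine ⟨fun x y hxy => ?_, fun x => ?_⟩
  · obtain ⟨m, hm⟩ := hinv (x - y)
    rw [← sub_eq_zero, ← hm, smul_sub, show n • x = n • y from hxy, sub_self, smul_zero]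
  · obtain ⟨m, hm⟩ := hinv x
    exact ⟨m • x, by simp only [smul_comm n m, hm]⟩

theorem finite_primarySub [Fact p.Prime] [Module.Finite ℤ M] : Finite (primarySub p M) := by
  have : Module.Finite ℤ (primarySub p M) :=
    inferInstanceAs (Module.Finite ℤ (AddSubgroup.toIntSubmodule (primarySub p M)))
  have : AddGroup.FG (primarySub p M) := Module.Finite.iff_addGroup_fg.mp this
  refine AddCommGroup.finite_of_fg_isAddTorsion _ fun x => ?_
  obtain ⟨k, hk⟩ := x.2
  exact isOfFinAddOrder_iff_nsmul_eq_zero.mpr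
    ⟨p ^ k, pow_pos (Fact.out : p.Prime).pos k, Subtype.ext hk⟩

end PrimaryComponent

namespace AddMonoidHom

variable {A B : Type*} [AddCommGroup A] [AddCommGroup B]

theorem range_nsmul_eq_range {f : A →+ B} {c : ℕ} (hc : Surjective fun x : A => c • x) :
    (c • f).range = f.range := by
  ext y
  constructor
  · rintro ⟨x, rfl⟩
    exact ⟨c • x, by simp⟩
  · rintro ⟨x, rfl⟩
    obtain ⟨x', rfl⟩ := hc x
    exact ⟨x', by simp⟩

theorem injective_of_comp_eq_nsmul {F : A →+ B} {G : B →+ A} {n : ℕ}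
    (hFG : ∀ y, F (G y) = n • y) (hn : Injective fun y : B => n • y) : Injective G :=
  fun y₁ y₂ h => hn (by simp only [← hFG, h])

theorem range_comp_eq_range_of_comp_eq_nsmul {F : A →+ B} {G : B →+ A} {n : ℕ}
    (hFG : ∀ y, F (G y) = n • y) (hn : Surjective fun y : B => n • y) :
    (G.comp F).range = G.range := by
  refine le_antisymm (by rintro _ ⟨x, rfl⟩; exact ⟨F x, rfl⟩) ?_
  rintro _ ⟨y, rfl⟩
  obtain ⟨y', rfl⟩ := hn y
  exact ⟨G y', by simp [hFG]⟩

end AddMonoidHom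

namespace PadicInt

variable {p : ℕ} [Fact p.Prime]

theorem isUnit_natCast_sub_one : IsUnit ((p : ℤ_[p]) - 1) := by
  have hp : (p : ℤ_[p]) ∈ nonunits ℤ_[p] := by
    rw [← IsLocalRing.mem_maximalIdeal, maximalIdeal_eq_span_p]
    exact Ideal.mem_span_singleton_self _
  simpa using (IsLocalRing.isUnit_one_sub_self_of_mem_nonunits _ hp).neg

theorem not_dvd_appr_of_isUnit {x : ℤ_[p]} (hx : IsUnit x) {n : ℕ} (hn : n ≠ 0) :
    ¬ p ∣ x.appr n := by
  rintro ⟨c, hc⟩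
  have hdiff : x - x.appr n ∈ Ideal.span {(p : ℤ_[p])} :=
    Ideal.span_singleton_le_span_singleton.mpr (dvd_pow_self _ hn) (appr_spec n x)
  have happr : ((x.appr n : ℕ) : ℤ_[p]) ∈ Ideal.span {(p : ℤ_[p])} :=
    Ideal.mem_span_singleton.mpr ⟨c, by rw [hc]; push_cast; ring⟩
  have hmem : x ∈ IsLocalRing.maximalIdeal ℤ_[p] := by
    rw [maximalIdeal_eq_span_p]
    simpa using add_mem hdiff happr
  exact hmem hx

theorem not_dvd_appr_inverse_natCast_sub_one {n : ℕ} (hn : n ≠ 0) :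
    ¬ p ∣ (Ring.inverse ((p : ℤ_[p]) - 1)).appr n := by
  obtain ⟨u, hu⟩ := isUnit_natCast_sub_one (p := p)
  rw [← hu, Ring.inverse_unit]
  exact not_dvd_appr_of_isUnit (Units.isUnit _) hn

end PadicInt

theorem sum_edgeCnt_mul {V E : Type} [Fintype V] [Fintype E] [DecidableEq V] (o t : E → V)
    (u : V) (f : V → ℤ) : ∑ v, edgeCnt o t u v * f v = ∑ ε : {ε : E // t ε = u}, f (o ε) := by
  rw [← Fintype.sum_fiberwise (fun ε : {ε : E // t ε = u} => o ε)]
  refine Finset.sum_congr rfl fun v _ => ?_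
  rw [Finset.sum_congr rfl fun ε _ => congrArg f ε.2, Finset.sum_const, Finset.card_univ,
    nsmul_eq_mul, edgeCnt, Nat.card_eq_fintype_card]
  congr 2
  exact Fintype.card_congr ((Equiv.subtypeSubtypeEquivSubtypeInter (fun ε => t ε = u)
    (fun ε => o ε = v)).trans (Equiv.subtypeEquivRight fun _ => and_comm)).symm

section GaloisCover

variable {Δ V E : Type} [Group Δ] [MulAction Δ V] [MulAction Δ E]

theorem eq_one_of_smul_eq_self_of_existsUnique {ι : Type} {w : ι → V}
    (hbasis : ∀ v : V, ∃! q : ι × Δ, q.2 • w q.1 = v) {σ : Δ} {v : V} (h : σ • v = v) :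
    σ = 1 := by
  obtain ⟨⟨i, τ⟩, hτ, huniq⟩ := hbasis v
  have : (i, σ * τ) = (i, τ) := huniq (i, σ * τ) (by simp only [mul_smul] at hτ ⊢; rw [hτ, h])
  simpa using congrArg Prod.snd this

theorem smul_left_injective_of_free (hfree : ∀ {σ : Δ} {v : V}, σ • v = v → σ = 1) (u : V) :
    Injective fun σ : Δ => σ • u := fun σ τ h => by
  have : (τ⁻¹ * σ) • u = u := by rw [mul_smul, show σ • u = τ • u from h, inv_smul_smul]
  rw [← inv_mul_eq_one.mp (hfree this)]

noncomputable def orbitFiberEquiv (hfree : ∀ {σ : Δ} {v : V}, σ • v = v → σ = 1) (u : V) :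
    Δ ≃ {v : V // Quotient.mk (orbitRel Δ V) v = Quotient.mk _ u} :=
  Equiv.ofBijective (fun σ => ⟨σ • u, Quotient.sound ⟨σ, rfl⟩⟩)
    ⟨fun σ τ h => smul_left_injective_of_free hfree u (congrArg Subtype.val h), fun ⟨v, hv⟩ => by
      obtain ⟨σ, rfl⟩ := Quotient.exact hv
      exact ⟨σ, rfl⟩⟩

noncomputable def fiberEquivQuotMap (hfree : ∀ {σ : Δ} {v : V}, σ • v = v → σ = 1) (o : E → V)
    (ho : ∀ (σ : Δ) (ε : E), o (σ • ε) = σ • o ε) (u : V) :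
    {ε : E // o ε = u} ≃ {e // quotMap o ho e = Quotient.mk _ u} :=
  Equiv.ofBijective (fun ε => ⟨Quotient.mk _ ε, congrArg (Quotient.mk _) ε.2⟩)
    ⟨fun ⟨ε, hε⟩ ⟨ε', hε'⟩ h => by
      obtain ⟨σ, hσ⟩ := Quotient.exact (congrArg Subtype.val h)
      have hσ : σ • ε' = ε := hσ
      have : σ • u = u := by rw [← hε', ← ho, hσ, hε, hε']
      simp only [Subtype.mk.injEq]
      rw [← hσ, hfree this, one_smul],
    fun ⟨e, he⟩ => by
      induction e using Quotient.inductionOn with | h ε =>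
      obtain ⟨σ, hσ⟩ := Quotient.exact he
      have hσ : σ • u = o ε := hσ
      exact ⟨⟨σ⁻¹ • ε, by rw [ho, ← hσ, inv_smul_smul]⟩,
        Subtype.ext (orbitRel.Quotient.quotient_smul_eq (g := σ⁻¹))⟩⟩

theorem valCnt_quotMap [Fintype E] [Fintype (Quotient (orbitRel Δ E))]
    (hfree : ∀ {σ : Δ} {v : V}, σ • v = v → σ = 1) (o : E → V)
    (ho : ∀ (σ : Δ) (ε : E), o (σ • ε) = σ • o ε) (u : V) :
    valCnt (quotMap o ho) (Quotient.mk _ u) = valCnt o u :=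
  congrArg _ (Nat.card_congr (fiberEquivQuotMap hfree o ho u)).symm

def pullDiv : (Quotient (orbitRel Δ V) → ℤ) →+ (V → ℤ) where
  toFun f v := f (Quotient.mk _ v)
  map_zero' := rfl
  map_add' _ _ := rfl

theorem pullDiv_injective : Injective (pullDiv (Δ := Δ) (V := V)) :=
  fun _ _ h => funext (Quotient.ind (congrFun h))

variable [Fintype V]

open scoped Classical in
noncomputable def pushDiv : (V → ℤ) →+ (Quotient (orbitRel Δ V) → ℤ) where
  toFun D x := ∑ v : {v : V // Quotient.mk _ v = x}, D v
  map_zero' := by ext; simp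
  map_add' _ _ := by ext; simp [Finset.sum_add_distrib]

theorem degHom_pushDiv [Fintype (Quotient (orbitRel Δ V))] (D : V → ℤ) :
    degHom (pushDiv (Δ := Δ) D) = degHom D := by
  classical exact Fintype.sum_fiberwise _ _

variable [Fintype E] [Fintype (Quotient (orbitRel Δ E))] (o t : E → V)
  (ho : ∀ (σ : Δ) (ε : E), o (σ • ε) = σ • o ε) (ht : ∀ (σ : Δ) (ε : E), t (σ • ε) = σ • t ε)

/-- Both edge sums run over the edges ending at `u`, resp. `⟦u⟧`, and `fiberEquivQuotMap`
matches these up. -/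
theorem lapHom_pullDiv [Fintype (Quotient (orbitRel Δ V))]
    (hfree : ∀ {σ : Δ} {v : V}, σ • v = v → σ = 1)
    (f : Quotient (orbitRel Δ V) → ℤ) :
    lapHom o t (pullDiv f) = pullDiv (lapHom (quotMap o ho) (quotMap t ht) f) := by
  classical
  funext u
  change valCnt o u * f (Quotient.mk _ u) - ∑ v, edgeCnt o t u v * f (Quotient.mk _ v)
    = valCnt (quotMap o ho) (Quotient.mk _ u) * f (Quotient.mk _ u)
      - ∑ y, edgeCnt (quotMap o ho) (quotMap t ht) (Quotient.mk _ u) y * f y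
  rw [valCnt_quotMap hfree o ho, sum_edgeCnt_mul, sum_edgeCnt_mul,
    ← Equiv.sum_comp (fiberEquivQuotMap hfree t ht u)]
  rfl

variable [Fintype Δ]

theorem pushDiv_apply_mk (hfree : ∀ {σ : Δ} {v : V}, σ • v = v → σ = 1) (D : V → ℤ) (u : V) :
    pushDiv (Δ := Δ) D (Quotient.mk _ u) = ∑ σ : Δ, D (σ • u) := by
  classical exact (Equiv.sum_comp (orbitFiberEquiv hfree u) fun v => D v).symm

theorem pushDiv_pullDiv (hfree : ∀ {σ : Δ} {v : V}, σ • v = v → σ = 1)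
    (f : Quotient (orbitRel Δ V) → ℤ) : pushDiv (pullDiv f) = Fintype.card Δ • f := by
  funext x
  induction x using Quotient.inductionOn with | h u =>
  rw [pushDiv_apply_mk hfree]
  simp only [pullDiv, AddMonoidHom.coe_mk, ZeroHom.coe_mk, orbitRel.Quotient.quotient_smul_eq,
    Finset.sum_const, Finset.card_univ, Pi.smul_apply]

theorem pullDiv_pushDiv (hfree : ∀ {σ : Δ} {v : V}, σ • v = v → σ = 1) (D : V → ℤ) :
    pullDiv (Δ := Δ) (pushDiv D) = ∑ σ : Δ, shiftHom σ D := by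
  funext u
  calc pushDiv D (Quotient.mk _ u) = ∑ σ : Δ, D (σ • u) := pushDiv_apply_mk hfree D u
    _ = ∑ σ : Δ, D (σ⁻¹ • u) := (Equiv.sum_comp (Equiv.inv Δ) fun σ => D (σ • u)).symm
    _ = (∑ σ : Δ, shiftHom σ D) u := by simp [shiftHom, Finset.sum_apply]

variable [Fintype (Quotient (orbitRel Δ V))]

theorem degHom_pullDiv (hfree : ∀ {σ : Δ} {v : V}, σ • v = v → σ = 1)
    (f : Quotient (orbitRel Δ V) → ℤ) : degHom (pullDiv f) = Fintype.card Δ • degHom f := by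
  rw [← degHom_pushDiv (Δ := Δ), pushDiv_pullDiv hfree, map_nsmul]

theorem pushDiv_lapHom (hfree : ∀ {σ : Δ} {v : V}, σ • v = v → σ = 1) (D : V → ℤ) :
    pushDiv (lapHom o t D) = lapHom (quotMap o ho) (quotMap t ht) (pushDiv D) := by
  apply pullDiv_injective (Δ := Δ)
  rw [← lapHom_pullDiv o t ho ht hfree, pullDiv_pushDiv hfree, pullDiv_pushDiv hfree, map_sum]
  exact Finset.sum_congr rfl fun σ _ => (lap_shift o t ho ht σ D).symm

end GaloisCover

section PicardFunctoriality

variable {V W E F : Type} [Fintype V] [Fintype W] [Fintype E] [Fintype F]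

instance (o t : E → V) : Module.Finite ℤ (pic0 o t) :=
  have : Module.Finite ℤ (div0 V) :=
    inferInstanceAs (Module.Finite ℤ (AddSubgroup.toIntSubmodule (div0 V)))
  Module.Finite.of_surjective (QuotientAddGroup.mk' (prSub o t)).toIntLinearMap
    (QuotientAddGroup.mk'_surjective _)

def div0Map (φ : (V → ℤ) →+ (W → ℤ)) (hφ : ∀ D ∈ div0 V, φ D ∈ div0 W) : div0 V →+ div0 W :=
  (φ.comp (div0 V).subtype).codRestrict _ fun D => hφ D D.2

noncomputable def pic0Map {o t : E → V} {o' t' : F → W} (φ : (V → ℤ) →+ (W → ℤ))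
    (hφ : ∀ D ∈ div0 V, φ D ∈ div0 W) (hlap : ∀ D, φ (lapHom o t D) = lapHom o' t' (φ D)) :
    pic0 o t →+ pic0 o' t' :=
  QuotientAddGroup.map _ _ (div0Map φ hφ) fun D ⟨C, hC⟩ => ⟨φ C, by
    rw [← hlap, hC]
    rfl⟩

end PicardFunctoriality

section GaloisCoverPicard

variable {Δ V E : Type} [Group Δ] [Fintype Δ] [MulAction Δ V] [MulAction Δ E]
  [Fintype V] [Fintype E] [Fintype (Quotient (orbitRel Δ V))]
  [Fintype (Quotient (orbitRel Δ E))] (hfree : ∀ {σ : Δ} {v : V}, σ • v = v → σ = 1) (o t : E → V)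
  (ho : ∀ (σ : Δ) (ε : E), o (σ • ε) = σ • o ε) (ht : ∀ (σ : Δ) (ε : E), t (σ • ε) = σ • t ε)

noncomputable def pushPic : pic0 o t →+ pic0 (quotMap o ho) (quotMap t ht) :=
  pic0Map pushDiv (fun D hD => (degHom_pushDiv D).trans hD) (pushDiv_lapHom o t ho ht hfree)

noncomputable def pullPic : pic0 (quotMap o ho) (quotMap t ht) →+ pic0 o t :=
  pic0Map pullDiv
    (fun f hf => (degHom_pullDiv hfree f).trans (by rw [AddMonoidHom.mem_ker.mp hf, smul_zero]))
    fun f => (lapHom_pullDiv o t ho ht hfree f).symm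

theorem pushPic_pullPic (y : pic0 (quotMap o ho) (quotMap t ht)) :
    pushPic hfree o t ho ht (pullPic hfree o t ho ht y) = Fintype.card Δ • y := by
  induction y using QuotientAddGroup.induction_on with | H f =>
  rw [← QuotientAddGroup.mk_nsmul]
  exact congrArg _ (Subtype.ext (pushDiv_pullDiv hfree f))

theorem pullPic_pushPic (x : pic0 o t) :
    pullPic hfree o t ho ht (pushPic hfree o t ho ht x) = ∑ σ : Δ, picAct o t ho ht σ x := by
  induction x using QuotientAddGroup.induction_on with | H D =>
  change ((_ : div0 V) : pic0 o t) = ∑ σ : Δ, ((shiftDiv0 σ D : div0 V) : pic0 o t)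
  rw [← QuotientAddGroup.mk_sum]
  exact congrArg _ (Subtype.ext ((pullDiv_pushDiv hfree D).trans (by simp [shiftDiv0])))

end GaloisCoverPicard

theorem not_dvd_card_of_mulEquiv_units {p : ℕ} [Fact p.Prime] {Δ : Type} [Group Δ] [Fintype Δ]
    (hΔ : Nonempty (Δ ≃* (ZMod p)ˣ)) : ¬ p ∣ Fintype.card Δ := by
  obtain ⟨e⟩ := hΔ
  have hp := (Fact.out : p.Prime).two_le
  rw [Fintype.card_congr e.toEquiv, ZMod.card_units]
  exact fun h => absurd (Nat.le_of_dvd (by omega) h) (by omega)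

section TrivialCharacter

variable {p : ℕ} {Δ V E : Type} [CommGroup Δ] [Fintype Δ] [Fintype V] [Fintype E]
  [MulAction Δ V] [MulAction Δ E] (o t : E → V)
  (ho : ∀ (σ : Δ) (ε : E), o (σ • ε) = σ • o ε) (ht : ∀ (σ : Δ) (ε : E), t (σ • ε) = σ • t ε)

theorem ePsiHom_one [Fact p.Prime] :
    ePsiHom p o t ho ht 1 = (Ring.inverse ((p : ℤ_[p]) - 1)).appr
      (Nat.card (primarySub p (pic0 o t))) • ∑ σ : Δ, actA p o t ho ht σ := by
  simp only [ePsiHom, MonoidHom.one_apply, Units.val_one, mul_one, Finset.smul_sum]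
  exact Equiv.sum_comp (Equiv.inv Δ) fun σ => _ • actA p o t ho ht σ

variable [Fintype (Quotient (orbitRel Δ V))] [Fintype (Quotient (orbitRel Δ E))]
  (hfree : ∀ {σ : Δ} {v : V}, σ • v = v → σ = 1)

theorem primarySubMap_pullPic_comp_pushPic :
    (primarySubMap p (pullPic hfree o t ho ht)).comp (primarySubMap p (pushPic hfree o t ho ht))
      = ∑ σ : Δ, actA p o t ho ht σ := by
  ext x
  simp [primarySubMap, pullPic_pushPic, actA]

end TrivialCharacter

theorem statement19_general (p : ℕ) [Fact p.Prime]
    {Δ V E : Type} [CommGroup Δ] [Fintype Δ] [Fintype V] [Fintype E]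
    [MulAction Δ V] [MulAction Δ E]
    [Fintype (Quotient (MulAction.orbitRel Δ V))]
    [Fintype (Quotient (MulAction.orbitRel Δ E))]
    (hΔ : Nonempty (Δ ≃* (ZMod p)ˣ))
    (o t : E → V)
    (ho : ∀ (σ : Δ) (ε : E), o (σ • ε) = σ • o ε)
    (ht : ∀ (σ : Δ) (ε : E), t (σ • ε) = σ • t ε)
    (g : ℕ) (w : Fin g → V)
    (hbasis : ∀ v : V, ∃! q : Fin g × Δ, q.2 • w q.1 = v) :
    Nonempty ((ePsiHom p o t ho ht (1 : Δ →* ℤ_[p]ˣ)).range ≃+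
        primarySub p (pic0 (quotMap o ho) (quotMap t ht))) ∧
    Nat.card (ePsiHom p o t ho ht (1 : Δ →* ℤ_[p]ˣ)).range
      = Nat.card (primarySub p (pic0 (quotMap o ho) (quotMap t ht))) := by
  have hfree {σ : Δ} {v : V} : σ • v = v → σ = 1 := eq_one_of_smul_eq_self_of_existsUnique hbasis
  set F := primarySubMap p (pushPic hfree o t ho ht)
  set G := primarySubMap p (pullPic hfree o t ho ht)
  have hFG (y) : F (G y) = Fintype.card Δ • y := Subtype.ext (pushPic_pullPic hfree o t ho ht y)
  have := finite_primarySub (p := p) (M := pic0 o t)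
  have hA : Nat.card (primarySub p (pic0 o t)) ≠ 0 := Nat.card_pos.ne'
  have hcoeff := bijective_nsmul_primarySub (M := pic0 o t)
    (PadicInt.not_dvd_appr_inverse_natCast_sub_one (p := p) hA)
  have hcard := bijective_nsmul_primarySub
    (M := pic0 (quotMap o ho) (quotMap t ht)) (not_dvd_card_of_mulEquiv_units hΔ)
  have hrange : (ePsiHom p o t ho ht 1).range = G.range := by
    rw [ePsiHom_one, AddMonoidHom.range_nsmul_eq_range hcoeff.2,
      ← primarySubMap_pullPic_comp_pushPic o t ho ht hfree,
      AddMonoidHom.range_comp_eq_range_of_comp_eq_nsmul hFG hcard.2]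
  let e := (AddEquiv.addSubgroupCongr hrange).trans
    (AddMonoidHom.ofInjective (AddMonoidHom.injective_of_comp_eq_nsmul hFG hcard.1)).symm
  exact ⟨⟨e⟩, Nat.card_congr e.toEquiv⟩

/-- the trivial character component.  Let `p` be an odd prime and `Y/X`
a Galois cover of finite connected graphs with Galois group `Δ ≅ 𝔽_p^×`, with `A` the
`p`-primary subgroup of `Pic⁰(Y)`.  For the trivial character `ψ₀ = 1`, the component
`e_{ψ₀}A` is isomorphic as a `ℤ_p`-module (equivalently, as an abelian group) to the
`p`-primary subgroup of `Pic⁰(X)`, where `X` is the quotient graph; in particular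
`#e_{ψ₀}A` equals `κ_p(X) = #Pic⁰_p(X)`, the `p`-part of the number of spanning trees of
`X`. -/
theorem statement19 (p : ℕ) [Fact p.Prime] (hodd : Odd p)
    {Δ V E : Type} [CommGroup Δ] [Fintype Δ] [Fintype V] [Fintype E]
    [MulAction Δ V] [MulAction Δ E]
    [Fintype (Quotient (MulAction.orbitRel Δ V))]
    [Fintype (Quotient (MulAction.orbitRel Δ E))]
    (hΔ : Nonempty (Δ ≃* (ZMod p)ˣ))
    (o t : E → V) (bar : E → E)
    (hbar : ∀ ε, bar (bar ε) = ε)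
    (hob : ∀ ε, o (bar ε) = t ε) (htb : ∀ ε, t (bar ε) = o ε)
    (ho : ∀ (σ : Δ) (ε : E), o (σ • ε) = σ • o ε)
    (ht : ∀ (σ : Δ) (ε : E), t (σ • ε) = σ • t ε)
    (hconn : ∀ u v : V, Relation.ReflTransGen (fun x y => ∃ ε : E, o ε = x ∧ t ε = y) u v)
    (g : ℕ) (w : Fin g → V)
    (hbasis : ∀ v : V, ∃! q : Fin g × Δ, q.2 • w q.1 = v) :
    Nonempty ((ePsiHom p o t ho ht (1 : Δ →* ℤ_[p]ˣ)).range ≃+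
        primarySub p (pic0 (quotMap o ho) (quotMap t ht))) ∧
    Nat.card (ePsiHom p o t ho ht (1 : Δ →* ℤ_[p]ˣ)).range
      = Nat.card (primarySub p (pic0 (quotMap o ho) (quotMap t ht))) :=
  statement19_general p hΔ o t ho ht g w hbasis
end QuotientGraph
end
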